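/- There exist C₀ > 0 and s̄₀ > 0, depending only on a, μ, p, such that for all s ≥ s̄₀ and all z ∈ ℝ: | e^{-(p+1)s/(p-1)} H( e^{s/(p-1)} z ) | ≤ (C₀ / s^a) ( |z|^{p+1} + 1 ). -/

import Mathlib

open Real Filter

/-! Write `λ = e^{s/(p-1)}`, so that the left side is `λ^{-(p+1)} |H(λ z)|`, and split the
integral defining `H` at `T = λ^{1/2}`. On `[0, T]` the denominator is at least `(log 2)^a`, so
that piece contributes `O(λ^{-(p+1)} T^{p+1}) = O(e^{-(p+1)s/(2(p-1))})`, which is eventually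
below `s^{-a}`. On `[T, λ|z|]` the denominator is at least `(log T²)^a = (s/(p-1))^a`, which gives
the factor `s^{-a}` in front of `λ^{-(p+1)} (λ|z|)^{p+1} = |z|^{p+1}`. -/

noncomputable def hfun (p a μ : ℝ) (z : ℝ) : ℝ :=
  μ * |z| ^ (p - 1) * z / (Real.log (2 + z ^ 2)) ^ a

noncomputable def Hfun (p a μ : ℝ) (z : ℝ) : ℝ :=
  ∫ ξ in (0:ℝ)..z, hfun p a μ ξ

lemma log_two_add_sq_pos (z : ℝ) : 0 < log (2 + z ^ 2) :=
  log_pos (by nlinarith [sq_nonneg z])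

section

variable {p a μ : ℝ}

lemma hfun_neg (z : ℝ) : hfun p a μ (-z) = -hfun p a μ z := by
  simp only [hfun, abs_neg, neg_sq]
  ring

lemma Hfun_neg (z : ℝ) : Hfun p a μ (-z) = Hfun p a μ z := by
  have h := intervalIntegral.integral_comp_neg (a := 0) (b := z) (hfun p a μ)
  simp only [hfun_neg, intervalIntegral.integral_neg, neg_zero] at h
  rw [Hfun, intervalIntegral.integral_symm, ← h, neg_neg, Hfun]

lemma continuous_hfun (hp : 1 ≤ p) : Continuous (hfun p a μ) := by
  have hlog : Continuous fun z : ℝ => log (2 + z ^ 2) :=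
    (by fun_prop : Continuous fun z : ℝ => 2 + z ^ 2).log fun z => by positivity
  have hnum : Continuous fun z : ℝ => μ * |z| ^ (p - 1) * z :=
    (continuous_const.mul (continuous_abs.rpow_const fun _ => Or.inr (by linarith))).mul
      continuous_id
  exact hnum.div (hlog.rpow_const fun z => Or.inl (log_two_add_sq_pos z).ne') fun z =>
    (rpow_pos_of_pos (log_two_add_sq_pos z) a).ne'

lemma abs_hfun (hp : p ≠ 0) (z : ℝ) :
    |hfun p a μ z| = |μ| * |z| ^ p / log (2 + z ^ 2) ^ a := by
  have hpow : |z| ^ (p - 1) * |z| = |z| ^ p := by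
    rw [← rpow_add_one' (abs_nonneg z) (by simpa using hp), sub_add_cancel]
  rw [hfun, abs_div, abs_mul, abs_mul, abs_of_nonneg (rpow_nonneg (abs_nonneg z) _),
    abs_of_pos (rpow_pos_of_pos (log_two_add_sq_pos z) a), mul_assoc, hpow]

lemma abs_hfun_le (hp : p ≠ 0) (ha : 0 ≤ a) {T z : ℝ} (hT : 0 ≤ T) (hTz : T ≤ |z|) :
    |hfun p a μ z| ≤ |μ| / log (2 + T ^ 2) ^ a * |z| ^ p := by
  have hlog : log (2 + T ^ 2) ≤ log (2 + z ^ 2) :=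
    log_le_log (by positivity) (by nlinarith [sq_abs z])
  rw [abs_hfun hp, div_mul_eq_mul_div]
  have := log_two_add_sq_pos T
  gcongr

lemma abs_integral_hfun_le (hp : 0 < p) (ha : 0 ≤ a) {T y : ℝ} (hT : 0 ≤ T) (hTy : T ≤ y) :
    |∫ ξ in T..y, hfun p a μ ξ| ≤ |μ| / log (2 + T ^ 2) ^ a * (y ^ (p + 1) / (p + 1)) := by
  have hbound : ∀ ξ ∈ Set.Ioc T y, ‖hfun p a μ ξ‖ ≤ |μ| / log (2 + T ^ 2) ^ a * ξ ^ p := by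
    intro ξ hξ
    have hξ0 : 0 ≤ ξ := hT.trans hξ.1.le
    have hTξ : T ≤ |ξ| := by rw [abs_of_nonneg hξ0]; exact hξ.1.le
    simpa only [Real.norm_eq_abs, abs_of_nonneg hξ0] using abs_hfun_le hp.ne' ha hT hTξ
  calc |∫ ξ in T..y, hfun p a μ ξ|
      ≤ ∫ ξ in T..y, |μ| / log (2 + T ^ 2) ^ a * ξ ^ p :=
        intervalIntegral.norm_integral_le_of_norm_le hTy (MeasureTheory.ae_of_all _ hbound)
          ((intervalIntegral.intervalIntegrable_rpow' (by linarith)).const_mul _)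
    _ = |μ| / log (2 + T ^ 2) ^ a * ((y ^ (p + 1) - T ^ (p + 1)) / (p + 1)) := by
        rw [intervalIntegral.integral_const_mul, integral_rpow (Or.inl (by linarith))]
    _ ≤ |μ| / log (2 + T ^ 2) ^ a * (y ^ (p + 1) / (p + 1)) := by
        have := rpow_nonneg hT (p + 1)
        have := log_two_add_sq_pos T
        gcongr
        linarith

lemma abs_Hfun_le_of_nonneg (hp : 0 < p) (ha : 0 ≤ a) {y : ℝ} (hy : 0 ≤ y) :
    |Hfun p a μ y| ≤ |μ| / log 2 ^ a * (y ^ (p + 1) / (p + 1)) := by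
  simpa [Hfun] using abs_integral_hfun_le (μ := μ) hp ha le_rfl hy

lemma abs_Hfun_le (hp : 1 ≤ p) (ha : 0 ≤ a) {T y : ℝ} (hT : 0 ≤ T) (hy : 0 ≤ y) :
    |Hfun p a μ y| ≤ |μ| / log 2 ^ a * (T ^ (p + 1) / (p + 1)) +
      |μ| / log (2 + T ^ 2) ^ a * (y ^ (p + 1) / (p + 1)) := by
  have hp0 : 0 < p := by linarith
  rcases le_total y T with hyT | hTy
  · have hfar : 0 ≤ |μ| / log (2 + T ^ 2) ^ a * (y ^ (p + 1) / (p + 1)) := by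
      have := log_two_add_sq_pos T
      positivity
    have hnear : |μ| / log 2 ^ a * (y ^ (p + 1) / (p + 1)) ≤
        |μ| / log 2 ^ a * (T ^ (p + 1) / (p + 1)) := by
      gcongr
    linarith [abs_Hfun_le_of_nonneg (μ := μ) hp0 ha hy]
  · have hint := (continuous_hfun (a := a) (μ := μ) hp).intervalIntegrable
      (μ := MeasureTheory.volume)
    rw [Hfun, ← intervalIntegral.integral_add_adjacent_intervals (hint 0 T) (hint T y)]
    exact (abs_add_le _ _).trans
      (add_le_add (abs_Hfun_le_of_nonneg hp0 ha hT) (abs_integral_hfun_le hp0 ha hT hTy))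

lemma Hfun_abs (z : ℝ) : Hfun p a μ |z| = Hfun p a μ z := by
  rcases abs_choice z with h | h <;> simp only [h, Hfun_neg]

lemma abs_rescaled_Hfun_le (hp : 1 < p) (ha : 0 ≤ a) {s : ℝ} (hs : 0 < s) (z : ℝ) :
    |exp (-(p + 1) * s / (p - 1)) * Hfun p a μ (exp (s / (p - 1)) * z)| ≤
      |μ| / (p + 1) * (exp (-((p + 1) / (2 * (p - 1))) * s) / log 2 ^ a +
        |z| ^ (p + 1) * ((p - 1) ^ a / s ^ a)) := by
  have hp1 : 0 < p - 1 := by linarith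
  set T := exp (s / (2 * (p - 1)))
  set y := exp (s / (p - 1)) * |z|
  have hET :
      exp (-(p + 1) * s / (p - 1)) * T ^ (p + 1) = exp (-((p + 1) / (2 * (p - 1))) * s) := by
    rw [← exp_mul, ← exp_add]
    congr 1
    field_simp
    ring
  have hEy : exp (-(p + 1) * s / (p - 1)) * y ^ (p + 1) = |z| ^ (p + 1) := by
    rw [mul_rpow (exp_pos _).le (abs_nonneg z), ← exp_mul, ← mul_assoc, ← exp_add,
      show -(p + 1) * s / (p - 1) + s / (p - 1) * (p + 1) = 0 by ring, exp_zero, one_mul]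
  have hlog : s / (p - 1) ≤ log (2 + T ^ 2) := by
    have hT2 : T ^ 2 = exp (s / (p - 1)) := by
      rw [← exp_nat_mul]
      congr 1
      field_simp
      norm_num
    calc s / (p - 1) = log (T ^ 2) := by rw [hT2, log_exp]
      _ ≤ log (2 + T ^ 2) := log_le_log (by positivity) (by linarith)
  have hinv : 1 / log (2 + T ^ 2) ^ a ≤ (p - 1) ^ a / s ^ a := by
    rw [show (p - 1) ^ a / s ^ a = 1 / (s / (p - 1)) ^ a by
      rw [div_rpow hs.le hp1.le, one_div_div]]
    gcongr
  have hy : Hfun p a μ (exp (s / (p - 1)) * z) = Hfun p a μ y := by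
    rw [← Hfun_abs, abs_mul, abs_of_pos (exp_pos _)]
  rw [abs_mul, abs_of_pos (exp_pos _), hy]
  calc exp (-(p + 1) * s / (p - 1)) * |Hfun p a μ y|
      ≤ exp (-(p + 1) * s / (p - 1)) *
        (|μ| / log 2 ^ a * (T ^ (p + 1) / (p + 1)) +
          |μ| / log (2 + T ^ 2) ^ a * (y ^ (p + 1) / (p + 1))) := by
        gcongr
        exact abs_Hfun_le hp.le ha (exp_pos _).le (by positivity)
    _ = |μ| / (p + 1) * (exp (-((p + 1) / (2 * (p - 1))) * s) / log 2 ^ a +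
        |z| ^ (p + 1) * (1 / log (2 + T ^ 2) ^ a)) := by
        rw [← hET, ← hEy]
        ring
    _ ≤ _ := by gcongr

end

lemma eventually_exp_neg_mul_le_one_div_rpow (a : ℝ) {c : ℝ} (hc : 0 < c) :
    ∀ᶠ s in atTop, exp (-c * s) ≤ 1 / s ^ a := by
  filter_upwards [eventually_gt_atTop 0,
    (tendsto_rpow_mul_exp_neg_mul_atTop_nhds_zero a c hc).eventually_lt_const one_pos]
    with s hs hlt
  rw [le_div_iff₀ (rpow_pos_of_pos hs a), mul_comm]
  exact hlt.le

/-- Pointwise estimate on the rescaled antiderivative `H`. -/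
theorem stmt7 (p : ℝ) (hp : 1 < p) (a : ℝ) (ha : 0 < a) (μ : ℝ) :
    ∃ C₀ > (0:ℝ), ∃ sb > (0:ℝ), ∀ s : ℝ, sb ≤ s → ∀ z : ℝ,
      |Real.exp (-(p + 1) * s / (p - 1)) * Hfun p a μ (Real.exp (s / (p - 1)) * z)| ≤
        C₀ / s ^ a * (|z| ^ (p + 1) + 1) := by
  obtain ⟨N, hN⟩ := eventually_atTop.mp ((eventually_gt_atTop 0).and
    (eventually_exp_neg_mul_le_one_div_rpow a (c := (p + 1) / (2 * (p - 1))) (by positivity)))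
  set K := |μ| / (p + 1) * (1 / log 2 ^ a + (p - 1) ^ a)
  refine ⟨K + 1, by positivity, max N 1, by positivity, fun s hs z => ?_⟩
  obtain ⟨hs0, hexp⟩ := hN s (le_of_max_le_left hs)
  calc _ ≤ |μ| / (p + 1) * (exp (-((p + 1) / (2 * (p - 1))) * s) / log 2 ^ a +
          |z| ^ (p + 1) * ((p - 1) ^ a / s ^ a)) := abs_rescaled_Hfun_le hp ha.le hs0 z
    _ ≤ |μ| / (p + 1) * (1 / s ^ a / log 2 ^ a + |z| ^ (p + 1) * ((p - 1) ^ a / s ^ a)) := by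
        gcongr
    _ = |μ| / (p + 1) / s ^ a * (1 / log 2 ^ a + (p - 1) ^ a * |z| ^ (p + 1)) := by ring
    _ ≤ |μ| / (p + 1) / s ^ a * ((1 / log 2 ^ a + (p - 1) ^ a) * (|z| ^ (p + 1) + 1)) := by
        have : 0 ≤ 1 / log 2 ^ a * |z| ^ (p + 1) := by positivity
        have : 0 ≤ (p - 1) ^ a := by positivity
        gcongr
        linarith
    _ = K / s ^ a * (|z| ^ (p + 1) + 1) := by ring
    _ ≤ (K + 1) / s ^ a * (|z| ^ (p + 1) + 1) := by gcongr; linarith
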